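/- arXiv:0711.1151 — 3 statements merged into one kernel-verified Lean document; each statement's English description precedes it below -/
import Mathlib

section
/- For discrete random variables X, Y, Z with finite joint entropy, 2·H(X,Y,Z) ≤ H(X,Y) + H(X,Z) + H(Y,Z). -/
open Finset

/-- Probability that the discrete random variable `X` takes the value `v`,
where `p` is the probability mass function on the finite sample space `Ω`. -/
noncomputable def probOf {Ω S : Type*} [Fintype Ω] [DecidableEq S]
    (p : Ω → ℝ) (X : Ω → S) (v : S) : ℝ :=
  ∑ ω ∈ univ.filter (fun ω => X ω = v), p ω

/-- Shannon entropy (base 2) of a discrete random variable. -/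
noncomputable def H {Ω S : Type*} [Fintype Ω] [DecidableEq S]
    (p : Ω → ℝ) (X : Ω → S) : ℝ :=
  -∑ v ∈ univ.image X, probOf p X v * Real.logb 2 (probOf p X v)

/-- Conditional Shannon entropy `H(X | Y)`. -/
noncomputable def condH {Ω S T : Type*} [Fintype Ω] [DecidableEq S] [DecidableEq T]
    (p : Ω → ℝ) (X : Ω → S) (Y : Ω → T) : ℝ :=
  -∑ v ∈ univ.image (fun ω => (X ω, Y ω)),
      probOf p (fun ω => (X ω, Y ω)) v *
        Real.logb 2 (probOf p (fun ω => (X ω, Y ω)) v / probOf p Y v.2)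

/-- Joint entropy of the subfamily `(X i)_{i ∈ A}`. -/
noncomputable def jointH {Ω S : Type*} [Fintype Ω] [DecidableEq S] {n : ℕ}
    (p : Ω → ℝ) (X : Fin n → Ω → S) (A : Finset (Fin n)) : ℝ :=
  H p (fun ω (i : {i // i ∈ A}) => X i.1 ω)

/-- Conditional joint entropy `H(X_A | X_B)`. -/
noncomputable def condJointH {Ω S : Type*} [Fintype Ω] [DecidableEq S] {n : ℕ}
    (p : Ω → ℝ) (X : Fin n → Ω → S) (A B : Finset (Fin n)) : ℝ :=
  condH p (fun ω (i : {i // i ∈ A}) => X i.1 ω) (fun ω (i : {i // i ∈ B}) => X i.1 ω)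

/-! Both Shannon inequalities used are instances of Gibbs' inequality `H(W) ≤ -𝔼 log₂ q(W)`,
valid for every sub-probability vector `q` that is positive where `W` has positive mass.
The product of the marginals, `q(x, y, z) = P(x) P(y, z)`, gives `H(X,Y,Z) ≤ H(X) + H(Y,Z)`;
the conditionally independent coupling `q(x, y, z) = P(x, y) P(x, z) / P(x)` gives
`H(X,Y,Z) + H(X) ≤ H(X,Y) + H(X,Z)`. Adding the two yields the claim. -/

section

variable {Ω : Type*} [Fintype Ω] (p : Ω → ℝ)

lemma sum_image_probOf_mul {B : Type*} [DecidableEq B] (X : Ω → B) (F : B → ℝ) :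
    ∑ v ∈ univ.image X, probOf p X v * F v = ∑ ω, p ω * F (X ω) := by
  refine sum_image' _ fun v _ => ?_
  rw [probOf, sum_mul]
  exact sum_congr rfl fun ω hω => by rw [(mem_filter.mp hω).2]

lemma sum_image_probOf {B : Type*} [DecidableEq B] (hsum : ∑ ω, p ω = 1) (X : Ω → B) :
    ∑ v ∈ univ.image X, probOf p X v = 1 := by
  simpa [hsum] using sum_image_probOf_mul p X fun _ => 1

lemma sum_probOf_pair {B C : Type*} [DecidableEq B] [DecidableEq C]
    (X : Ω → B) (Y : Ω → C) (x : B) :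
    ∑ y ∈ univ.image Y, probOf p (fun ω => (X ω, Y ω)) (x, y) = probOf p X x := by
  rw [probOf, ← sum_fiberwise_of_maps_to (g := Y) (t := univ.image Y)
    (fun ω _ => mem_image_of_mem Y (mem_univ ω))]
  refine sum_congr rfl fun y _ => ?_
  rw [probOf, filter_filter]
  simp only [Prod.mk.injEq]

lemma H_eq_neg_sum_mul_logb {B : Type*} [DecidableEq B] (X : Ω → B) :
    H p X = -∑ ω, p ω * Real.logb 2 (probOf p X (X ω)) := by
  rw [H, sum_image_probOf_mul p X fun v => Real.logb 2 (probOf p X v)]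

variable {p}

lemma probOf_nonneg {B : Type*} [DecidableEq B] (hp : ∀ ω, 0 ≤ p ω) (X : Ω → B) (v : B) :
    0 ≤ probOf p X v :=
  sum_nonneg fun ω _ => hp ω

lemma probOf_pos {B : Type*} [DecidableEq B] (hp : ∀ ω, 0 ≤ p ω) (X : Ω → B) {ω : Ω}
    (hω : 0 < p ω) : 0 < probOf p X (X ω) :=
  hω.trans_le <| single_le_sum (fun ω _ => hp ω) (by simp)

lemma sum_mul_congr_of_pos (hp : ∀ ω, 0 ≤ p ω) {f g : Ω → ℝ}
    (h : ∀ ω, 0 < p ω → f ω = g ω) :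
    ∑ ω, p ω * f ω = ∑ ω, p ω * g ω := by
  refine sum_congr rfl fun ω _ => ?_
  rcases (hp ω).eq_or_lt with h0 | h0
  · simp [← h0]
  · rw [h ω h0]

lemma H_le_neg_sum_mul_logb {B : Type*} [DecidableEq B] (hp : ∀ ω, 0 ≤ p ω)
    (hsum : ∑ ω, p ω = 1) (W : Ω → B) (q : B → ℝ) (s : Finset B) (hs : univ.image W ⊆ s)
    (hq_nonneg : ∀ v, 0 ≤ q v) (hq_pos : ∀ ω, 0 < p ω → 0 < q (W ω))
    (hq_sum : ∑ v ∈ s, q v ≤ 1) :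
    H p W ≤ -∑ ω, p ω * Real.logb 2 (q (W ω)) := by
  have hlog2 : 0 < Real.log 2 := Real.log_pos one_lt_two
  have pointwise : ∀ ω, p ω * Real.logb 2 (q (W ω)) - p ω * Real.logb 2 (probOf p W (W ω))
      ≤ (p ω * (q (W ω) / probOf p W (W ω)) - p ω) / Real.log 2 := by
    intro ω
    rcases (hp ω).eq_or_lt with h0 | h0
    · simp [← h0]
    have hP := probOf_pos hp W h0
    have hq := hq_pos ω h0
    rw [← mul_sub, ← Real.logb_div hq.ne' hP.ne', Real.logb, ← mul_sub_one, mul_div_assoc]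
    gcongr
    exact Real.log_le_sub_one_of_pos (div_pos hq hP)
  have hratio : ∑ ω, p ω * (q (W ω) / probOf p W (W ω)) ≤ 1 := calc
    ∑ ω, p ω * (q (W ω) / probOf p W (W ω))
        = ∑ v ∈ univ.image W, probOf p W v * (q v / probOf p W v) :=
      (sum_image_probOf_mul p W fun v => q v / probOf p W v).symm
    _ ≤ ∑ v ∈ univ.image W, q v := sum_le_sum fun v _ => by
      rcases (probOf_nonneg hp W v).eq_or_lt with h0 | h0
      · rw [← h0, zero_mul]; exact hq_nonneg v
      · rw [mul_div_cancel₀ _ h0.ne']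
    _ ≤ ∑ v ∈ s, q v := sum_le_sum_of_subset_of_nonneg hs fun v _ _ => hq_nonneg v
    _ ≤ 1 := hq_sum
  have hsum_pointwise := sum_le_sum fun ω (_ : ω ∈ univ) => pointwise ω
  rw [sum_sub_distrib, ← sum_div, sum_sub_distrib, hsum] at hsum_pointwise
  have hgap : (∑ ω, p ω * (q (W ω) / probOf p W (W ω)) - 1) / Real.log 2 ≤ 0 :=
    div_nonpos_of_nonpos_of_nonneg (by linarith) hlog2.le
  rw [H_eq_neg_sum_mul_logb]
  linarith

lemma image_pair_subset_product {B C : Type*} [DecidableEq B] [DecidableEq C]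
    (X : Ω → B) (Y : Ω → C) :
    univ.image (fun ω => (X ω, Y ω)) ⊆ univ.image X ×ˢ univ.image Y := by
  intro v hv
  obtain ⟨ω, -, rfl⟩ := mem_image.mp hv
  exact mem_product.mpr ⟨mem_image_of_mem X (mem_univ ω), mem_image_of_mem Y (mem_univ ω)⟩

lemma H_pair_le_add {B C : Type*} [DecidableEq B] [DecidableEq C]
    (hp : ∀ ω, 0 ≤ p ω) (hsum : ∑ ω, p ω = 1) (X : Ω → B) (Y : Ω → C) :
    H p (fun ω => (X ω, Y ω)) ≤ H p X + H p Y := by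
  have product_law_sum :
      ∑ v ∈ univ.image X ×ˢ univ.image Y, probOf p X v.1 * probOf p Y v.2 = 1 := by
    rw [sum_product, ← sum_mul_sum, sum_image_probOf p hsum, sum_image_probOf p hsum, one_mul]
  have gibbs := H_le_neg_sum_mul_logb hp hsum (fun ω => (X ω, Y ω))
    (fun v => probOf p X v.1 * probOf p Y v.2) _ (image_pair_subset_product X Y)
    (fun v => mul_nonneg (probOf_nonneg hp X v.1) (probOf_nonneg hp Y v.2))
    (fun ω hω => mul_pos (probOf_pos hp X hω) (probOf_pos hp Y hω)) product_law_sum.le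
  rw [sum_mul_congr_of_pos hp (fun ω hω => Real.logb_mul (probOf_pos hp X hω).ne'
    (probOf_pos hp Y hω).ne')] at gibbs
  simp only [mul_add, sum_add_distrib] at gibbs
  rw [H_eq_neg_sum_mul_logb p X, H_eq_neg_sum_mul_logb p Y]
  linarith

lemma H_triple_add_H_le {B C D : Type*} [DecidableEq B] [DecidableEq C] [DecidableEq D]
    (hp : ∀ ω, 0 ≤ p ω) (hsum : ∑ ω, p ω = 1) (X : Ω → B) (Y : Ω → C) (Z : Ω → D) :
    H p (fun ω => (X ω, Y ω, Z ω)) + H p X ≤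
      H p (fun ω => (X ω, Y ω)) + H p (fun ω => (X ω, Z ω)) := by
  set PXY := probOf p fun ω => (X ω, Y ω)
  set PXZ := probOf p fun ω => (X ω, Z ω)
  set PX := probOf p X
  have fiber_sum : ∀ x, ∑ w ∈ univ.image Y ×ˢ univ.image Z,
      PXY (x, w.1) * PXZ (x, w.2) / PX x = PX x := by
    intro x
    rw [← sum_div, sum_product' (f := fun y z => PXY (x, y) * PXZ (x, z)), ← sum_mul_sum,
      sum_probOf_pair, sum_probOf_pair]
    exact mul_self_div_self _
  have conditional_law_sum : ∑ v ∈ univ.image X ×ˢ (univ.image Y ×ˢ univ.image Z),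
      PXY (v.1, v.2.1) * PXZ (v.1, v.2.2) / PX v.1 = 1 := by
    rw [sum_product, sum_congr rfl fun x _ => fiber_sum x, sum_image_probOf p hsum]
  have gibbs := H_le_neg_sum_mul_logb hp hsum (fun ω => (X ω, Y ω, Z ω))
    (fun v => PXY (v.1, v.2.1) * PXZ (v.1, v.2.2) / PX v.1) _
    ((image_pair_subset_product X _).trans
      (product_subset_product_right (image_pair_subset_product Y Z)))
    (fun v => div_nonneg (mul_nonneg (probOf_nonneg hp _ _) (probOf_nonneg hp _ _))
      (probOf_nonneg hp _ _))
    (fun ω hω => div_pos (mul_pos (probOf_pos hp _ hω) (probOf_pos hp _ hω))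
      (probOf_pos hp X hω))
    conditional_law_sum.le
  rw [sum_mul_congr_of_pos hp (fun ω hω => by
    rw [Real.logb_div (mul_pos (probOf_pos hp _ hω) (probOf_pos hp _ hω)).ne'
      (probOf_pos hp X hω).ne', Real.logb_mul (probOf_pos hp _ hω).ne'
      (probOf_pos hp _ hω).ne'])] at gibbs
  simp only [mul_sub, mul_add, sum_sub_distrib, sum_add_distrib] at gibbs
  rw [H_eq_neg_sum_mul_logb p X, H_eq_neg_sum_mul_logb p (fun ω => (X ω, Y ω)),
    H_eq_neg_sum_mul_logb p (fun ω => (X ω, Z ω))]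
  linarith

end

/-- `2·H(X,Y,Z) ≤ H(X,Y) + H(X,Z) + H(Y,Z)`. -/
theorem two_entropy_le {Ω S T U : Type*} [Fintype Ω]
    [DecidableEq S] [DecidableEq T] [DecidableEq U]
    (p : Ω → ℝ) (hp : ∀ ω, 0 ≤ p ω) (hsum : ∑ ω, p ω = 1)
    (X : Ω → S) (Y : Ω → T) (Z : Ω → U) :
    2 * H p (fun ω => (X ω, Y ω, Z ω)) ≤
      H p (fun ω => (X ω, Y ω)) + H p (fun ω => (X ω, Z ω)) +
        H p (fun ω => (Y ω, Z ω)) := by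
  have submodularity := H_triple_add_H_le hp hsum X Y Z
  have subadditivity := H_pair_le_add hp hsum X fun ω => (Y ω, Z ω)
  linarith
end

section
/- Let X₁,…,Xₙ be discrete random variables with finite joint entropy and 𝒜 a finite multiset of subsets of [n]. Let 𝒜♯ be the multiset consisting of the sets A♯_j = {i ∈ [n] : i lies in at least j members of 𝒜} for j = 1, 2, …. Then ∑_{A∈𝒜♯} H(X_A) ≤ ∑_{A∈𝒜} H(X_A). -/
/-!
Joint entropy `A ↦ H(X_A)` is submodular: `H(X_{A ∪ B}) + H(X_{A ∩ B}) ≤ H(X_A) + H(X_B)`.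
Writing `P_A(ω)` for the probability of the atom of `X_A` containing `ω`, the defect is
`∑ p(ω) log (P_A P_B / (P_{A ∪ B} P_{A ∩ B}))`, which `log x ≤ x - 1` bounds by
`∑ p(ω) P_A P_B / (P_{A ∪ B} P_{A ∩ B}) - 1 ≤ 0`.

Every submodular `F` satisfies `∑_j F(A♯_j) ≤ ∑_{A ∈ 𝒜} F(A)`, by induction on `𝒜`: adding `A`
turns the levels into `A♯_{k+1} ∪ (A ∩ A♯_k)`, so submodularity bounds the new level by
`F(A♯_{k+1}) + F(A ∩ A♯_k) - F(A ∩ A♯_{k+1})`, and the correction terms telescope to `F(A)`.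
-/

open Finset

section Entropy

variable {Ω α β γ : Type*} [Fintype Ω] [DecidableEq α] [DecidableEq β] [DecidableEq γ]
  {p : Ω → ℝ}

theorem probOf_nonneg_s10 (hp : ∀ ω, 0 ≤ p ω) (f : Ω → α) (a : α) : 0 ≤ probOf p f a :=
  sum_nonneg fun ω _ => hp ω

theorem probOf_self_pos (hp : ∀ ω, 0 ≤ p ω) (f : Ω → α) {ω : Ω} (hω : 0 < p ω) :
    0 < probOf p f (f ω) :=
  hω.trans_le (single_le_sum (fun ω' _ => hp ω') (by simp))

theorem sum_image_probOf_mul_s10 (f : Ω → α) (φ : α → ℝ) :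
    ∑ a ∈ univ.image f, probOf p f a * φ a = ∑ ω, p ω * φ (f ω) := by
  rw [← sum_fiberwise_of_maps_to (fun ω _ => mem_image_of_mem f (mem_univ ω))]
  refine sum_congr rfl fun a _ => ?_
  rw [probOf, sum_mul]
  exact sum_congr rfl fun ω hω => by rw [(mem_filter.mp hω).2]

theorem sum_image_probOf_s10 (f : Ω → α) : ∑ a ∈ univ.image f, probOf p f a = ∑ ω, p ω := by
  simpa using sum_image_probOf_mul_s10 (p := p) f 1

theorem sum_image_filter_probOf_eq_probOf_comp (f : Ω → α) (k : α → γ) (c : γ) :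
    ∑ a ∈ univ.image f with k a = c, probOf p f a = probOf p (fun ω => k (f ω)) c := by
  have := sum_image_probOf_mul_s10 (p := p) f (fun a => if k a = c then 1 else 0)
  simp only [mul_ite, mul_one, mul_zero] at this
  rw [sum_filter, this, ← sum_filter, probOf]

theorem H_eq_sum (f : Ω → α) : H p f = -∑ ω, p ω * Real.logb 2 (probOf p f (f ω)) := by
  rw [H, sum_image_probOf_mul_s10 f fun a => Real.logb 2 (probOf p f a)]

theorem H_eq_of_forall_eq_iff (f : Ω → α) (g : Ω → β)
    (hfg : ∀ ω ω', f ω' = f ω ↔ g ω' = g ω) : H p f = H p g := by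
  simp only [H_eq_sum, probOf, hfg]

theorem sum_mul_probOf_div_le_one (hp : ∀ ω, 0 ≤ p ω) (hsum : ∑ ω, p ω = 1)
    (f : Ω → α) (g : Ω → β) (k : α → γ) (l : β → γ) (hkl : ∀ ω, k (f ω) = l (g ω)) :
    ∑ ω, p ω * (probOf p f (f ω) * probOf p g (g ω) /
      (probOf p (fun ω => (f ω, g ω)) (f ω, g ω) * probOf p (fun ω => k (f ω)) (k (f ω))))
      ≤ 1 := by
  set fg : Ω → α × β := fun ω => (f ω, g ω)
  set z : Ω → γ := fun ω => k (f ω)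
  set Φ : α × β → ℝ := fun v => probOf p f v.1 * probOf p g v.2 / probOf p z (k v.1)
  have hΦ : ∀ v, 0 ≤ Φ v := fun v =>
    div_nonneg (mul_nonneg (probOf_nonneg_s10 hp f _) (probOf_nonneg_s10 hp g _)) (probOf_nonneg_s10 hp z _)
  have hz : ∀ c, ∑ b ∈ univ.image g with l b = c, probOf p g b = probOf p z c := by
    intro c
    rw [sum_image_filter_probOf_eq_probOf_comp]
    simp only [z, hkl]
  -- Group `ω` by the value of `fg`, then by the common value `c` of `k ∘ f = l ∘ g`: the sum
  -- becomes at most `∑ c, P(z = c)² / P(z = c)`.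
  calc _ = ∑ v ∈ univ.image fg, probOf p fg v *
          (probOf p f v.1 * probOf p g v.2 / (probOf p fg v * probOf p z (k v.1))) :=
        (sum_image_probOf_mul_s10 _ fun v => _).symm
    _ ≤ ∑ v ∈ univ.image fg, Φ v := by
        refine sum_le_sum fun v _ => ?_
        rcases (probOf_nonneg_s10 hp fg v).eq_or_lt with h | h
        · rw [← h, zero_mul]; exact hΦ v
        · rw [← mul_div_assoc, mul_div_mul_left _ _ h.ne']
    _ = ∑ c ∈ univ.image z, ∑ v ∈ univ.image fg with k v.1 = c, Φ v :=
        (sum_fiberwise_of_maps_to (by simp [fg, z]) _).symm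
    _ ≤ ∑ c ∈ univ.image z, ∑ a ∈ univ.image f with k a = c, ∑ b ∈ univ.image g with l b = c,
          Φ (a, b) := by
        refine sum_le_sum fun c _ => ?_
        rw [← sum_product']
        refine sum_le_sum_of_subset_of_nonneg ?_ fun v _ _ => hΦ v
        intro v hv
        simp only [fg, mem_filter, mem_image, mem_univ, true_and, mem_product] at hv ⊢
        obtain ⟨⟨ω, rfl⟩, hc⟩ := hv
        exact ⟨⟨⟨ω, rfl⟩, hc⟩, ⟨ω, rfl⟩, (hkl ω).symm.trans hc⟩
    _ = ∑ c ∈ univ.image z, probOf p z c := by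
        refine sum_congr rfl fun c _ => ?_
        simp only [Φ]
        rw [sum_congr rfl fun a ha => by rw [(mem_filter.mp ha).2]]
        simp only [← sum_div, ← sum_mul_sum, sum_image_filter_probOf_eq_probOf_comp, hz]
        exact mul_self_div_self _
    _ = 1 := by rw [sum_image_probOf_s10, hsum]

theorem sum_mul_log_nonpos (hp : ∀ ω, 0 ≤ p ω) (hsum : ∑ ω, p ω = 1) {r : Ω → ℝ}
    (hr : ∀ ω, 0 < p ω → 0 < r ω) (hpr : ∑ ω, p ω * r ω ≤ 1) :
    ∑ ω, p ω * Real.log (r ω) ≤ 0 := by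
  have hterm : ∀ ω, p ω * Real.log (r ω) ≤ p ω * r ω - p ω := fun ω => by
    rcases (hp ω).eq_or_lt with h | h
    · simp [← h]
    · nlinarith [Real.log_le_sub_one_of_pos (hr ω h)]
  calc ∑ ω, p ω * Real.log (r ω) ≤ ∑ ω, (p ω * r ω - p ω) := sum_le_sum fun ω _ => hterm ω
    _ ≤ 0 := by rw [sum_sub_distrib, hsum]; linarith

theorem H_prod_add_H_comp_le (hp : ∀ ω, 0 ≤ p ω) (hsum : ∑ ω, p ω = 1)
    (f : Ω → α) (g : Ω → β) (k : α → γ) (l : β → γ) (hkl : ∀ ω, k (f ω) = l (g ω)) :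
    H p (fun ω => (f ω, g ω)) + H p (fun ω => k (f ω)) ≤ H p f + H p g := by
  have hpos : ∀ ω, 0 < p ω → 0 < probOf p f (f ω) ∧ 0 < probOf p g (g ω) ∧
      0 < probOf p (fun ω => (f ω, g ω)) (f ω, g ω) ∧
      0 < probOf p (fun ω => k (f ω)) (k (f ω)) := fun ω h =>
    ⟨probOf_self_pos hp f h, probOf_self_pos hp g h, probOf_self_pos hp _ h,
      probOf_self_pos hp _ h⟩
  have hgibbs := sum_mul_log_nonpos hp hsum (fun ω h => by
      obtain ⟨hf, hg, hfg, hz⟩ := hpos ω h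
      positivity) (sum_mul_probOf_div_le_one hp hsum f g k l hkl)
  have hlog : ∀ ω, p ω * Real.log (probOf p f (f ω) * probOf p g (g ω) /
      (probOf p (fun ω => (f ω, g ω)) (f ω, g ω) * probOf p (fun ω => k (f ω)) (k (f ω))))
      = p ω * Real.log (probOf p f (f ω)) + p ω * Real.log (probOf p g (g ω))
        - (p ω * Real.log (probOf p (fun ω => (f ω, g ω)) (f ω, g ω))
          + p ω * Real.log (probOf p (fun ω => k (f ω)) (k (f ω)))) := fun ω => by
    rcases (hp ω).eq_or_lt with h | h
    · simp [← h]
    · obtain ⟨hf, hg, hfg, hz⟩ := hpos ω h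
      rw [Real.log_div (by positivity) (by positivity), Real.log_mul hf.ne' hg.ne',
        Real.log_mul hfg.ne' hz.ne']
      ring
  simp only [hlog, sum_sub_distrib, sum_add_distrib, sub_nonpos] at hgibbs
  have := div_le_div_of_nonneg_right hgibbs (Real.log_nonneg one_le_two)
  simp only [H_eq_sum, Real.logb, ← mul_div_assoc, ← sum_div, add_div] at this ⊢
  linarith

end Entropy

theorem jointH_union_add_jointH_inter_le {Ω S : Type*} [Fintype Ω] [DecidableEq S] {n : ℕ}
    {p : Ω → ℝ} (hp : ∀ ω, 0 ≤ p ω) (hsum : ∑ ω, p ω = 1) (X : Fin n → Ω → S)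
    (A B : Finset (Fin n)) :
    jointH p X (A ∪ B) + jointH p X (A ∩ B) ≤ jointH p X A + jointH p X B := by
  have hunion : jointH p X (A ∪ B) =
      H p (fun ω => (fun i : A => X i ω, fun i : B => X i ω)) := by
    refine H_eq_of_forall_eq_iff _ _ fun ω ω' => ?_
    simp only [funext_iff, Prod.ext_iff, Subtype.forall, mem_union, or_imp, forall_and]
  rw [hunion]
  exact H_prod_add_H_comp_le hp hsum (fun ω (i : A) => X i ω) (fun ω (i : B) => X i ω)
    (fun a (i : ↥(A ∩ B)) => a ⟨i, mem_of_mem_inter_left i.2⟩)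
    (fun b (i : ↥(A ∩ B)) => b ⟨i, mem_of_mem_inter_right i.2⟩) fun _ => rfl

section Compression

variable {α : Type*} [Fintype α] [DecidableEq α]

def sharpSet (𝒜 : Multiset (Finset α)) (j : ℕ) : Finset α :=
  univ.filter (fun i => j ≤ Multiset.card (𝒜.filter (fun A => i ∈ A)))

theorem sharpSet_zero (𝒜 : Multiset (Finset α)) : sharpSet 𝒜 0 = univ := by
  simp [sharpSet]

theorem sharpSet_card_succ (𝒜 : Multiset (Finset α)) :
    sharpSet 𝒜 (Multiset.card 𝒜 + 1) = ∅ := by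
  ext i
  simpa [sharpSet] using Nat.lt_succ_of_le (Multiset.card_le_card (Multiset.filter_le _ 𝒜))

theorem sharpSet_succ_subset (𝒜 : Multiset (Finset α)) (k : ℕ) :
    sharpSet 𝒜 (k + 1) ⊆ sharpSet 𝒜 k :=
  monotone_filter_right _ fun _ _ => Nat.le_of_succ_le

theorem sharpSet_cons_succ (A : Finset α) (𝒜 : Multiset (Finset α)) (k : ℕ) :
    sharpSet (A ::ₘ 𝒜) (k + 1) = sharpSet 𝒜 (k + 1) ∪ A ∩ sharpSet 𝒜 k := by
  ext i
  by_cases hi : i ∈ A <;> simp [sharpSet, Multiset.filter_cons, hi]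
  omega

theorem sum_range_sharpSet_le {F : Finset α → ℝ}
    (hF : ∀ A B, F (A ∪ B) + F (A ∩ B) ≤ F A + F B) (𝒜 : Multiset (Finset α)) :
    ∑ k ∈ range (Multiset.card 𝒜), F (sharpSet 𝒜 (k + 1)) ≤ (𝒜.map F).sum := by
  induction 𝒜 using Multiset.induction with
  | empty => simp
  | cons A 𝒯 ih =>
    rw [Multiset.card_cons, Multiset.map_cons, Multiset.sum_cons]
    set m := Multiset.card 𝒯
    have hstep : ∀ k, F (sharpSet (A ::ₘ 𝒯) (k + 1)) ≤
        F (sharpSet 𝒯 (k + 1)) + (F (A ∩ sharpSet 𝒯 k) - F (A ∩ sharpSet 𝒯 (k + 1))) := by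
      intro k
      have := hF (sharpSet 𝒯 (k + 1)) (A ∩ sharpSet 𝒯 k)
      rw [← inter_assoc, inter_comm _ A, inter_assoc,
        inter_eq_left.mpr (sharpSet_succ_subset 𝒯 k)] at this
      rw [sharpSet_cons_succ]
      linarith
    calc ∑ k ∈ range (m + 1), F (sharpSet (A ::ₘ 𝒯) (k + 1))
        ≤ ∑ k ∈ range (m + 1), (F (sharpSet 𝒯 (k + 1))
            + (F (A ∩ sharpSet 𝒯 k) - F (A ∩ sharpSet 𝒯 (k + 1)))) :=
          sum_le_sum fun k _ => hstep k
      _ = ∑ k ∈ range m, F (sharpSet 𝒯 (k + 1)) + F A := by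
          rw [sum_add_distrib, sum_range_sub', sum_range_succ, sharpSet_zero, sharpSet_card_succ,
            inter_univ, inter_empty]
          ring
      _ ≤ F A + (𝒯.map F).sum := by linarith

theorem sum_Icc_sharpSet_le {F : Finset α → ℝ}
    (hF : ∀ A B, F (A ∪ B) + F (A ∩ B) ≤ F A + F B) (𝒜 : Multiset (Finset α)) :
    ∑ j ∈ Icc 1 (Multiset.card 𝒜), F (sharpSet 𝒜 j) ≤ (𝒜.map F).sum := by
  rw [← Ico_add_one_right_eq_Icc, sum_Ico_eq_sum_range]
  simpa [add_comm] using sum_range_sharpSet_le hF 𝒜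

end Compression

/-- Compression to the totally ordered family `𝒜♯` (where
`A♯_j = {i : i lies in at least j members of 𝒜}`) does not increase total entropy. -/
theorem sharp_compression_entropy_le {Ω S : Type*} [Fintype Ω] [DecidableEq S] {n : ℕ}
    (p : Ω → ℝ) (hp : ∀ ω, 0 ≤ p ω) (hsum : ∑ ω, p ω = 1)
    (X : Fin n → Ω → S) (𝒜 : Multiset (Finset (Fin n))) :
    ∑ j ∈ Finset.Icc 1 (Multiset.card 𝒜),
        jointH p X (univ.filter (fun i => j ≤ Multiset.card (𝒜.filter (fun A => i ∈ A))))
      ≤ (𝒜.map (fun A => jointH p X A)).sum :=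
  sum_Icc_sharpSet_le (jointH_union_add_jointH_inter_le hp hsum X) 𝒜
end

section
/- Uniform cover inequality for sumsets: let S₁,…,Sₙ be finite nonempty subsets of a commutative semigroup, S_A = ∑_{i∈A} S_i, and S = S₁+⋯+Sₙ. If 𝒜 is a uniform k-cover of [n] (each i ∈ [n] lies in exactly k members counted with multiplicity), then |S|^k ≤ ∏_{A∈𝒜} |S_A|. -/
open Finset

/-- Iterated sumset of a list of finite subsets of a commutative semigroup:
`sumList [T₁,…,Tₘ] = T₁ + ⋯ + Tₘ` (and `∅` for the empty list). -/
def sumList {G : Type*} [AddCommSemigroup G] [DecidableEq G] :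
    List (Finset G) → Finset G
  | [] => ∅
  | [T] => T
  | T :: U :: rest => Finset.image₂ (· + ·) T (sumList (U :: rest))

/-- The sumset `S_A = ∑_{i ∈ A} S i` in a commutative semigroup. -/
noncomputable def sumsetOn {G : Type*} [AddCommSemigroup G] [DecidableEq G] {n : ℕ}
    (S : Fin n → Finset G) (A : Finset (Fin n)) : Finset G :=
  sumList (A.toList.map S)

/-!
Following Gyarmati, Matolcsi and Ruzsa, adjoin a zero to the semigroup and prove the stronger
inequality for the new parts `(X + σ) \ (X + E)` of the sumsets, for every `σ` and `E`, by
induction on the index set. Enumerate `S x = {w₁, …, wₘ}`: the new part of `S x + Y` is the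
disjoint union of the layers `(Y + (wₜ + σ)) \ (Y + Eₜ)` with `Eₜ = (S x + E) ∪ {w_s + σ | s < t}`,
and each layer is again a new part of `Y`. Erasing `x` from every member of the cover gives a
`k`-cover of the remaining indices, so the induction hypothesis bounds every layer. A member
avoiding `x` contributes at most its whole new part to each layer, and the members containing `x`
are summed over the layers by Hölder's inequality with `k` equal exponents.
-/

open MeasureTheory
open scoped Pointwise ENNReal

namespace Finset

section NewPart

variable {M : Type*} [AddCommSemigroup M] [DecidableEq M]

def newPart (X : Finset M) (σ : M) (E : Finset M) : Finset M := (X + {σ}) \ (X + E)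

theorem mem_newPart {X E : Finset M} {σ z : M} :
    z ∈ newPart X σ E ↔ (∃ u ∈ X, u + σ = z) ∧ z ∉ X + E := by
  simp [newPart, mem_add]

theorem newPart_subset_image_add {Y E E' : Finset M} {a σ : M} (h : {a} + E ⊆ E') :
    newPart Y (a + σ) E' ⊆ (newPart Y σ E).image (a + ·) := by
  intro z hz
  obtain ⟨⟨u, hu, rfl⟩, hz⟩ := mem_newPart.1 hz
  refine mem_image.2 ⟨u + σ, mem_newPart.2 ⟨⟨u, hu, rfl⟩, fun hmem => hz ?_⟩, add_left_comm _ _ _⟩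
  obtain ⟨v, hv, e, he, hve⟩ := mem_add.1 hmem
  exact mem_add.2 ⟨v, hv, a + e, h (add_mem_add (mem_singleton_self a) he),
    by rw [add_left_comm, hve, add_left_comm]⟩

theorem card_newPart_le_of_singleton_add_subset {Y E E' : Finset M} {a σ : M}
    (h : {a} + E ⊆ E') : #(newPart Y (a + σ) E') ≤ #(newPart Y σ E) :=
  (card_le_card (newPart_subset_image_add h)).trans card_image_le

variable {κ : Type*} [Fintype κ] [LinearOrder κ] (w : κ → M) (σ : M) (E : Finset M)

def newPartLayer (Y : Finset M) (t : κ) : Finset M :=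
  newPart Y (w t + σ) ((univ.image w + E) ∪ (univ.filter (· < t)).image (w · + σ))

theorem newPart_add_eq_biUnion_newPartLayer (Y : Finset M) :
    newPart (univ.image w + Y) σ E = univ.biUnion (newPartLayer w σ E Y) := by
  ext z
  constructor
  · intro hz
    obtain ⟨⟨v, hv, rfl⟩, hz⟩ := mem_newPart.1 hz
    obtain ⟨_, hs, y, hy, rfl⟩ := mem_add.1 hv
    obtain ⟨s, -, rfl⟩ := mem_image.1 hs
    obtain ⟨t, ht, hmin⟩ := exists_min_image
      (univ.filter fun t => ∃ y' ∈ Y, y' + (w t + σ) = w s + y + σ) id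
      ⟨s, mem_filter.2 ⟨mem_univ s, y, hy, by ac_rfl⟩⟩
    obtain ⟨y', hy', hzt⟩ := (mem_filter.1 ht).2
    refine mem_biUnion.2 ⟨t, mem_univ t, mem_newPart.2 ⟨⟨y', hy', hzt⟩, fun hmem => ?_⟩⟩
    obtain ⟨u, hu, e', he', hue⟩ := mem_add.1 hmem
    rcases mem_union.1 he' with he' | he'
    · obtain ⟨_, hr, e, he, rfl⟩ := mem_add.1 he'
      obtain ⟨r, -, rfl⟩ := mem_image.1 hr
      exact hz (mem_add.2 ⟨w r + u, add_mem_add (mem_image_of_mem w (mem_univ r)) hu, e, he,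
        by rw [← hue]; ac_rfl⟩)
    · obtain ⟨r, hr, rfl⟩ := mem_image.1 he'
      exact (mem_filter.1 hr).2.not_ge (hmin r (mem_filter.2 ⟨mem_univ r, u, hu, hue⟩))
  · intro hz
    obtain ⟨t, -, hz⟩ := mem_biUnion.1 hz
    obtain ⟨⟨y, hy, rfl⟩, hz⟩ := mem_newPart.1 hz
    refine mem_newPart.2 ⟨⟨w t + y, add_mem_add (mem_image_of_mem w (mem_univ t)) hy, by ac_rfl⟩,
      fun hmem => hz ?_⟩
    obtain ⟨_, hv, e, he, hve⟩ := mem_add.1 hmem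
    obtain ⟨_, hr, u, hu, rfl⟩ := mem_add.1 hv
    obtain ⟨r, -, rfl⟩ := mem_image.1 hr
    exact mem_add.2 ⟨u, hu, w r + e,
      mem_union_left _ (add_mem_add (mem_image_of_mem w (mem_univ r)) he), by rw [← hve]; ac_rfl⟩

theorem disjoint_newPartLayer_of_lt (Y : Finset M) {s t : κ} (hst : s < t) :
    Disjoint (newPartLayer w σ E Y s) (newPartLayer w σ E Y t) := by
  refine disjoint_left.2 fun z hzs hzt => (mem_newPart.1 hzt).2 ?_
  obtain ⟨⟨y, hy, rfl⟩, -⟩ := mem_newPart.1 hzs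
  exact add_mem_add hy (mem_union_right _ (mem_image_of_mem _ (mem_filter.2 ⟨mem_univ s, hst⟩)))

theorem card_newPart_add_eq_sum_card_newPartLayer (Y : Finset M) :
    #(newPart (univ.image w + Y) σ E) = ∑ t, #(newPartLayer w σ E Y t) := by
  rw [newPart_add_eq_biUnion_newPartLayer, card_biUnion]
  exact ((pairwise_disjoint_on _).2 fun _ _ => disjoint_newPartLayer_of_lt w σ E Y).set_pairwise _

theorem card_newPartLayer_le (Y : Finset M) (t : κ) :
    #(newPartLayer w σ E Y t) ≤ #(newPart Y σ E) :=
  card_newPart_le_of_singleton_add_subset <| subset_union_left.trans' <|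
    add_subset_add_right <| singleton_subset_iff.2 <| mem_image_of_mem w (mem_univ t)

end NewPart

theorem newPart_zero_empty {M : Type*} [AddCommMonoid M] [DecidableEq M] (X : Finset M) :
    newPart X 0 ∅ = X := by
  simp [newPart, singleton_zero]

end Finset

theorem ENNReal.sum_prod_rpow_le_prod_sum_rpow {τ ι : Type*} (T : Finset τ) (J : Finset ι)
    (a : ι → τ → ℝ≥0∞) {p : ι → ℝ} (hp : ∑ j ∈ J, p j = 1) (hp₀ : ∀ j ∈ J, 0 ≤ p j) :
    ∑ t ∈ T, ∏ j ∈ J, a j t ^ p j ≤ ∏ j ∈ J, (∑ t ∈ T, a j t) ^ p j := by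
  let _ : MeasurableSpace τ := ⊤
  simpa [lintegral_finset] using ENNReal.lintegral_prod_norm_pow_le
    (μ := Measure.count.restrict (T : Set τ)) J (fun _ _ => Measurable.of_discrete.aemeasurable)
    hp hp₀

theorem Multiset.sum_pow_card_le_mul_prod_sum {τ β : Type*} [DecidableEq β] (T : Finset τ)
    {m : Multiset β} (hm : m ≠ 0) (f : τ → ℕ) (a : β → τ → ℕ) (P : ℕ)
    (h : ∀ t ∈ T, f t ^ card m ≤ P * (m.map (a · t)).prod) :
    (∑ t ∈ T, f t) ^ card m ≤ P * (m.map fun b => ∑ t ∈ T, a b t).prod := by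
  set J := m.toEnumFinset
  have hprod (g : β → ℕ) : (m.map g).prod = ∏ j ∈ J, g j.1 := by
    conv_lhs => rw [← Multiset.map_toEnumFinset_fst m, Multiset.map_map]
    rfl
  set k := card m
  have hJ : #J = k := Multiset.card_toEnumFinset m
  have hk : k ≠ 0 := by simpa [k] using hm
  have hr : ∑ _j ∈ J, (k : ℝ)⁻¹ = 1 := by simp [hJ, hk]
  simp only [hprod] at h ⊢
  have hroot (t : τ) (ht : t ∈ T) :
      (f t : ℝ≥0∞) ≤ (P : ℝ≥0∞) ^ (k : ℝ)⁻¹ * ∏ j ∈ J, (a j.1 t : ℝ≥0∞) ^ (k : ℝ)⁻¹ := by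
    rw [← ENNReal.pow_rpow_inv_natCast hk (f t : ℝ≥0∞), ENNReal.prod_rpow_of_nonneg (by positivity),
      ← ENNReal.mul_rpow_of_nonneg _ _ (by positivity)]
    gcongr
    exact_mod_cast h t ht
  have hsum : (∑ t ∈ T, f t : ℝ≥0∞) ≤
      (P : ℝ≥0∞) ^ (k : ℝ)⁻¹ * ∏ j ∈ J, (∑ t ∈ T, (a j.1 t : ℝ≥0∞)) ^ (k : ℝ)⁻¹ := by
    refine (sum_le_sum hroot).trans ?_
    rw [← mul_sum]
    gcongr
    exact ENNReal.sum_prod_rpow_le_prod_sum_rpow T J _ hr fun _ _ => by positivity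
  have := pow_le_pow_left₀ bot_le hsum k
  simp only [mul_pow, ← prod_pow, ENNReal.rpow_inv_natCast_pow hk] at this
  exact_mod_cast this

section UniformCover

variable {ι : Type*} [DecidableEq ι]

def IsUniformCover (𝒜 : Multiset (Finset ι)) (V : Finset ι) (k : ℕ) : Prop :=
  (∀ A ∈ 𝒜, A ⊆ V) ∧ ∀ i ∈ V, Multiset.card (𝒜.filter (i ∈ ·)) = k

theorem IsUniformCover.map_erase {𝒜 : Multiset (Finset ι)} {V : Finset ι} {k : ℕ} {x : ι}
    (h : IsUniformCover 𝒜 (insert x V) k) (hx : x ∉ V) :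
    IsUniformCover (𝒜.map (·.erase x)) V k := by
  refine ⟨Multiset.forall_mem_map_iff.2 fun A hA => subset_insert_iff.1 (h.1 A hA), fun i hi => ?_⟩
  rw [Multiset.filter_map, Multiset.card_map, ← h.2 i (mem_insert_of_mem hi)]
  congr 1
  refine Multiset.filter_congr fun A _ => ?_
  simp [ne_of_mem_of_not_mem hi hx]

variable {M : Type*} [AddCommMonoid M] [DecidableEq M]

theorem card_newPart_sum_pow_le_prod (S : ι → Finset M) {k : ℕ} (hk : 0 < k) {V : Finset ι}
    {𝒜 : Multiset (Finset ι)} (h : IsUniformCover 𝒜 V k) (σ : M) (E : Finset M) :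
    #(newPart (∑ i ∈ V, S i) σ E) ^ k ≤ (𝒜.map fun A => #(newPart (∑ i ∈ A, S i) σ E)).prod := by
  induction V using Finset.induction_on generalizing 𝒜 σ E with
  | empty =>
    rw [Multiset.map_congr rfl (g := fun _ => #(newPart (∑ i ∈ ∅, S i) σ E))
      fun A hA => by rw [subset_empty.1 (h.1 A hA)], Multiset.map_const', Multiset.prod_replicate]
    have : #(newPart (∑ i ∈ ∅, S i) σ E) ≤ 1 := by
      simpa [newPart] using card_le_card (sdiff_subset (s := {σ}) (t := E))
    rcases Nat.le_one_iff_eq_zero_or_eq_one.1 this with h0 | h1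
    · rw [h0, zero_pow hk.ne']
      exact Nat.zero_le _
    · rw [h1, one_pow, one_pow]
  | @insert x V hx ih =>
    obtain ⟨m, w, hw⟩ : ∃ m, ∃ w : Fin m → M, univ.image w = S x :=
      ⟨_, (S x).toList.get, by simp⟩
    have hlayers (A : Finset ι) (hxA : x ∈ A) : #(newPart (∑ i ∈ A, S i) σ E) =
        ∑ t, #(newPartLayer w σ E (∑ i ∈ A.erase x, S i) t) := by
      rw [← add_sum_erase A S hxA, ← hw, card_newPart_add_eq_sum_card_newPartLayer]
    set ℬ := 𝒜.filter (x ∈ ·)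
    set P := ((𝒜.filter (x ∉ ·)).map fun A => #(newPart (∑ i ∈ A, S i) σ E)).prod
    have hsplit (g : Finset ι → ℕ) :
        (𝒜.map g).prod = ((𝒜.filter (x ∉ ·)).map g).prod * (ℬ.map g).prod := by
      rw [mul_comm, ← Multiset.prod_add, ← Multiset.map_add, Multiset.filter_add_not]
    have hℬ : Multiset.card ℬ = k := h.2 x (mem_insert_self x V)
    have hstep (t : Fin m) : #(newPartLayer w σ E (∑ i ∈ V, S i) t) ^ Multiset.card ℬ ≤
        P * (ℬ.map fun A => #(newPartLayer w σ E (∑ i ∈ A.erase x, S i) t)).prod := by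
      calc #(newPartLayer w σ E (∑ i ∈ V, S i) t) ^ Multiset.card ℬ
          ≤ (𝒜.map fun A => #(newPartLayer w σ E (∑ i ∈ A.erase x, S i) t)).prod := by
            rw [hℬ]
            exact (ih (h.map_erase hx) (w t + σ) _).trans_eq (by rw [Multiset.map_map]; rfl)
        _ ≤ P * (ℬ.map fun A => #(newPartLayer w σ E (∑ i ∈ A.erase x, S i) t)).prod := by
            rw [hsplit]
            gcongr
            refine Multiset.prod_map_le_prod_map _ _ fun A hA => ?_
            rw [erase_eq_of_notMem (Multiset.mem_filter.1 hA).2]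
            exact card_newPartLayer_le w σ E _ t
    rw [hsplit, Multiset.map_congr rfl fun A hA => hlayers A (Multiset.mem_filter.1 hA).2,
      hlayers _ (mem_insert_self x V), erase_insert hx, ← hℬ]
    exact Multiset.sum_pow_card_le_mul_prod_sum univ (Multiset.card_pos.1 (hℬ ▸ hk)) _ _ P
      fun t _ => hstep t

end UniformCover

theorem card_sum_pow_le_prod {ι M : Type*} [DecidableEq ι] [AddCommMonoid M] [DecidableEq M]
    (S : ι → Finset M) {k : ℕ} (hk : 0 < k) {V : Finset ι} {𝒜 : Multiset (Finset ι)}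
    (h : IsUniformCover 𝒜 V k) :
    #(∑ i ∈ V, S i) ^ k ≤ (𝒜.map fun A => #(∑ i ∈ A, S i)).prod := by
  simpa only [newPart_zero_empty] using card_newPart_sum_pow_le_prod S hk h 0 ∅

section WithZero

variable {G : Type*} [AddCommSemigroup G] [DecidableEq G]

theorem image_coe_sumList {l : List (Finset G)} (hl : l ≠ []) :
    (sumList l).image ((↑) : G → WithZero G) = (l.map (·.image (↑))).sum := by
  match l, hl with
  | [T], _ => simp [sumList]
  | T :: U :: rest, _ =>
    change (T + sumList (U :: rest)).image _ = _
    rw [List.map_cons, List.sum_cons, ← image_coe_sumList (List.cons_ne_nil U rest)]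
    exact image_add WithZero.coeAddHom

theorem card_sumsetOn {n : ℕ} (S : Fin n → Finset G) {A : Finset (Fin n)} (hA : A.Nonempty) :
    #(sumsetOn S A) = #(∑ i ∈ A, (S i).image ((↑) : G → WithZero G)) := by
  rw [← card_image_of_injective _ WithZero.coe_injective, sumsetOn,
    image_coe_sumList (by simpa using hA.ne_empty), List.map_map]
  exact congrArg card (sum_map_toList A _)

-- `sumsetOn S ∅ = ∅`, whereas the empty sum in `WithZero G` is `{0}`.
theorem card_sumsetOn_le {n : ℕ} (S : Fin n → Finset G) (A : Finset (Fin n)) :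
    #(sumsetOn S A) ≤ #(∑ i ∈ A, (S i).image ((↑) : G → WithZero G)) := by
  rcases A.eq_empty_or_nonempty with rfl | hA
  · simp [sumsetOn, sumList]
  · exact (card_sumsetOn S hA).le

end WithZero

theorem sumset_uniform_cover_inequality_general {G : Type*} [AddCommSemigroup G] [DecidableEq G]
    {n k : ℕ} (S : Fin n → Finset G)
    (𝒜 : Multiset (Finset (Fin n))) (h𝒜 : ∀ A ∈ 𝒜, Finset.Nonempty A)
    (hcov : ∀ i : Fin n, Multiset.card (𝒜.filter (fun A => i ∈ A)) = k) :
    (sumsetOn S univ).card ^ k ≤ (𝒜.map (fun A => (sumsetOn S A).card)).prod := by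
  rcases k.eq_zero_or_pos with rfl | hk
  · have h𝒜₀ : 𝒜 = 0 := Multiset.eq_zero_of_forall_notMem fun A hA => by
      obtain ⟨i, hi⟩ := h𝒜 A hA
      exact Multiset.filter_eq_nil.1 (Multiset.card_eq_zero.1 (hcov i)) A hA hi
    simp [h𝒜₀]
  calc #(sumsetOn S univ) ^ k ≤ #(∑ i, (S i).image ((↑) : G → WithZero G)) ^ k := by
        gcongr; exact card_sumsetOn_le S univ
    _ ≤ (𝒜.map fun A => #(∑ i ∈ A, (S i).image ((↑) : G → WithZero G))).prod :=
        card_sum_pow_le_prod _ hk ⟨fun A _ => subset_univ A, fun i _ => hcov i⟩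
    _ = (𝒜.map fun A => #(sumsetOn S A)).prod :=
        congrArg _ (Multiset.map_congr rfl fun A hA => (card_sumsetOn S (h𝒜 A hA)).symm)

/-- Uniform cover inequality for sumsets: if `𝒜` is a uniform `k`-cover of `[n]`
then `|S|^k ≤ ∏_{A∈𝒜} |S_A|`. -/
theorem sumset_uniform_cover_inequality {G : Type*} [AddCommSemigroup G] [DecidableEq G]
    {n k : ℕ} (hn : 0 < n) (S : Fin n → Finset G) (hS : ∀ i, (S i).Nonempty)
    (𝒜 : Multiset (Finset (Fin n))) (h𝒜 : ∀ A ∈ 𝒜, Finset.Nonempty A)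
    (hcov : ∀ i : Fin n, Multiset.card (𝒜.filter (fun A => i ∈ A)) = k) :
    (sumsetOn S univ).card ^ k ≤ (𝒜.map (fun A => (sumsetOn S A).card)).prod :=
  sumset_uniform_cover_inequality_general S 𝒜 h𝒜 hcov
end
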